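/- Realize the root system C_ℓ in ℝ^ℓ (ℓ ≥ 2) with simple roots α_h = e_h − e_{h+1} (1 ≤ h ≤ ℓ−1), α_ℓ = 2e_ℓ. Let Π¹ = {α_{i_1}, …, α_{i_k}} with i_1 < ⋯ < i_k and k ≥ 2. Then Π¹ is admissible if and only if i_k = ℓ. -/

import Mathlib

/-!
Let `G_j` be the sum of the first `j` coordinates. Then `G_j α_h = δ_{hj}` for `h < ℓ` and
`G_ℓ α_ℓ = 2`, so the `G_j` read off simple-root coordinates. On roots `G_j ≤ 2`, and `G_j ≤ 1` on
the roots `±(e_i - e_j)`, the only ones with `G_ℓ = 0`. If `α_ℓ ∈ Π¹`, then `v = 2 α_a + Σ k_i φ_i`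
has `G_ℓ v = 4` when `a = ℓ`, and otherwise `G_ℓ v = 0` but `G_a v ≥ 2`; so `v` is never a root.
If the largest index `m` of `Π¹` is below `ℓ`, then
`2 α_m + 2 α_{m+1} + ⋯ + 2 α_{ℓ-1} + α_ℓ = 2 e_m` is a root.
-/

open Finset

namespace RootSystemC

section CoordSum

variable {ι : Type*}

def coordSum (s : Finset ι) : (ι → ℝ) →ₗ[ℝ] ℝ := ∑ j ∈ s, LinearMap.proj j

theorem coordSum_apply (s : Finset ι) (v : ι → ℝ) : coordSum s v = ∑ j ∈ s, v j := by
  simp [coordSum]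

theorem coordSum_single [DecidableEq ι] (s : Finset ι) (i : ι) :
    coordSum s (Pi.single i 1) = if i ∈ s then 1 else 0 := by
  rw [coordSum_apply, sum_pi_single']

theorem eq_of_forall_coordSum_Iic_eq [LinearOrder ι] [LocallyFiniteOrderBot ι] [WellFoundedLT ι]
    {u w : ι → ℝ} (h : ∀ j, coordSum (Iic j) u = coordSum (Iic j) w) : u = w := by
  rw [← sub_eq_zero]
  funext j
  induction j using WellFoundedLT.induction with
  | _ j ih =>
    have hsum : coordSum (Iic j) (u - w) = (u - w) j := by
      rw [coordSum_apply]
      refine sum_eq_single j (fun i hi hij => ih i (lt_of_le_of_ne (mem_Iic.1 hi) hij)) ?_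
      exact fun hj => absurd (mem_Iic.2 le_rfl) hj
    rw [← hsum, map_sub, h, sub_self, Pi.zero_apply]

end CoordSum

/-- The paper's `α_{h+1}`: indices start at `0`, so the long simple root is `α_{n-1}`. -/
def simpleRoot (n : ℕ) (h : Fin n) : Fin n → ℝ :=
  if hh : (h : ℕ) + 1 < n then Pi.single h 1 - Pi.single ⟨h + 1, hh⟩ 1 else (2 : ℝ) • Pi.single h 1

def roots (n : ℕ) : Set (Fin n → ℝ) :=
  {v | (∃ i j : Fin n, i ≠ j ∧ v = Pi.single i 1 - Pi.single j 1) ∨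
    (∃ i j : Fin n, i < j ∧
      (v = Pi.single i 1 + Pi.single j 1 ∨ v = -(Pi.single i 1 + Pi.single j 1))) ∨
    (∃ i : Fin n, v = (2 : ℝ) • Pi.single i 1 ∨ v = -((2 : ℝ) • Pi.single i 1))}

/-- The paper also asks `Π¹` to have at least two elements; that condition is kept separate. -/
def IsAdmissible {ι V : Type*} [Fintype ι] [AddCommGroup V] [Module ℝ V] (α : ι → V) (R : Set V)
    (S : Finset ι) : Prop :=
  ¬ ∃ a ∈ S, ∃ c : ι → ℕ, (∀ h, c h ≠ 0 → h ∉ S) ∧ (2 : ℝ) • α a + ∑ h, (c h : ℝ) • α h ∈ R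

variable {n : ℕ}

theorem coordSum_Iic_simpleRoot (j h : Fin n) :
    coordSum (Iic j) (simpleRoot n h) =
      if h = j then (if (h : ℕ) + 1 < n then 1 else 2) else 0 := by
  unfold simpleRoot
  have := j.isLt
  split_ifs
  all_goals simp only [map_sub, map_smul, coordSum_single, mem_Iic, Fin.le_def, Fin.ext_iff] at *
  all_goals split_ifs <;> first | omega | norm_num

theorem coordSum_Iic_combination (a j : Fin n) (c : Fin n → ℕ) :
    coordSum (Iic j) ((2 : ℝ) • simpleRoot n a + ∑ h, (c h : ℝ) • simpleRoot n h) =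
      (2 * (if a = j then 1 else 0) + c j) * (if (j : ℕ) + 1 < n then 1 else 2) := by
  simp only [map_add, map_sum, map_smul, smul_eq_mul, coordSum_Iic_simpleRoot, mul_ite, mul_zero,
    sum_ite_eq', mem_univ, if_true]
  obtain rfl | haj := eq_or_ne a j
  · simp only [if_true]
    split_ifs <;> ring
  · simp only [haj, if_false, zero_add]

theorem coordSum_le_two_of_mem_roots {r : Fin n → ℝ} (hr : r ∈ roots n) (s : Finset (Fin n)) :
    coordSum s r ≤ 2 := by
  rcases hr with ⟨i, j, -, rfl⟩ | ⟨i, j, -, rfl | rfl⟩ | ⟨i, rfl | rfl⟩ <;>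
    simp only [map_sub, map_add, map_neg, map_smul, coordSum_single] <;> split_ifs <;> norm_num

theorem coordSum_le_one_of_mem_roots {r : Fin n → ℝ} (hr : r ∈ roots n)
    (h0 : coordSum univ r = 0) (s : Finset (Fin n)) : coordSum s r ≤ 1 := by
  rcases hr with ⟨i, j, -, rfl⟩ | ⟨i, j, -, rfl | rfl⟩ | ⟨i, rfl | rfl⟩
  · simp only [map_sub, coordSum_single]
    split_ifs <;> norm_num
  all_goals simp [coordSum_single] at h0

theorem isAdmissible_of_last_mem {S : Finset (Fin n)} {l : Fin n} (hl : (l : ℕ) + 1 = n)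
    (hS : l ∈ S) : IsAdmissible (simpleRoot n) (roots n) S := by
  rintro ⟨a, -, c, hc, hr⟩
  have hcl : c l = 0 := by_contra fun h => hc l h hS
  have huniv : Iic l = univ :=
    eq_univ_of_forall fun i => mem_Iic.2 (Fin.le_def.2 (by have := i.isLt; omega))
  have hF := coordSum_Iic_combination a l c
  rw [huniv, hcl, if_neg (show ¬((l : ℕ) + 1 < n) by omega), Nat.cast_zero, add_zero] at hF
  obtain rfl | hal := eq_or_ne a l
  · have := coordSum_le_two_of_mem_roots hr univ
    rw [hF, if_pos rfl] at this
    norm_num at this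
  · rw [if_neg hal, mul_zero, zero_mul] at hF
    have hroot := coordSum_le_one_of_mem_roots hr hF (Iic a)
    rw [coordSum_Iic_combination, if_pos rfl,
      if_pos (lt_of_le_of_ne (by omega) (fun h => hal (Fin.ext (by omega))))] at hroot
    have : (0 : ℝ) ≤ c a := Nat.cast_nonneg _
    linarith

theorem not_isAdmissible_of_isGreatest {S : Finset (Fin n)} {m : Fin n}
    (hm : IsGreatest (S : Set (Fin n)) m) (hlt : (m : ℕ) + 1 < n) :
    ¬ IsAdmissible (simpleRoot n) (roots n) S := by
  let c : Fin n → ℕ := fun h => if h ≤ m then 0 else if (h : ℕ) + 1 < n then 2 else 1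
  have hsum :
      (2 : ℝ) • simpleRoot n m + ∑ h, (c h : ℝ) • simpleRoot n h = (2 : ℝ) • Pi.single m 1 := by
    refine eq_of_forall_coordSum_Iic_eq fun j => ?_
    simp only [coordSum_Iic_combination, map_smul, coordSum_single, mem_Iic, c, Fin.le_def,
      Fin.ext_iff]
    split_ifs <;> first | omega | norm_num
  refine not_not.2 ⟨m, hm.1, c, fun h hc hS => hc (if_pos (hm.2 hS)), ?_⟩
  rw [hsum]
  exact Or.inr (Or.inr ⟨m, Or.inl rfl⟩)

end RootSystemC

/-- In the root system `C_ℓ` with simple roots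
`α_h = e_h - e_{h+1}` (`h < ℓ`), `α_ℓ = 2e_ℓ`, a subset
`Π¹ = {α_{i_1}, …, α_{i_k}}` (`i_1 < ⋯ < i_k`, `k ≥ 2`) is admissible iff
`i_k = ℓ` (i.e. the last simple root belongs to `Π¹`). -/
theorem C_ell_admissible_iff
    (ℓ : ℕ) (hℓ : 2 ≤ ℓ)
    (e : Fin ℓ → (Fin ℓ → ℝ))
    (he : ∀ i, e i = Pi.single i 1)
    (α : Fin ℓ → (Fin ℓ → ℝ))
    (hα : ∀ (h : Fin ℓ) (hh : (h : ℕ) + 1 < ℓ), α h = e h - e ⟨(h : ℕ) + 1, hh⟩)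
    (hαlast : α ⟨ℓ - 1, by omega⟩ = (2 : ℝ) • e ⟨ℓ - 1, by omega⟩)
    (R : Set (Fin ℓ → ℝ))
    (hR : R = {v | (∃ i j : Fin ℓ, i ≠ j ∧ v = e i - e j) ∨
        (∃ i j : Fin ℓ, i < j ∧ (v = e i + e j ∨ v = -(e i + e j))) ∨
        (∃ i : Fin ℓ, v = (2 : ℝ) • e i ∨ v = -((2 : ℝ) • e i))})
    (k : ℕ) (hk : 2 ≤ k)
    (idx : Fin k → Fin ℓ) (hidx : StrictMono idx)
    (Pi1 : Finset (Fin ℓ)) (hPi1 : ∀ h, h ∈ Pi1 ↔ ∃ t, idx t = h) :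
    (¬ ∃ a ∈ Pi1, ∃ kf : Fin ℓ → ℕ, (∀ h, kf h ≠ 0 → h ∉ Pi1) ∧
        ((2 : ℝ) • α a + ∑ h, (kf h : ℝ) • α h) ∈ R) ↔
      (idx ⟨k - 1, by omega⟩ : ℕ) = ℓ - 1 := by
  obtain rfl : e = fun i => Pi.single i 1 := funext he
  obtain rfl : α = RootSystemC.simpleRoot ℓ := funext fun h => by
    unfold RootSystemC.simpleRoot
    split_ifs with hh
    · exact hα h hh
    · rw [show h = ⟨ℓ - 1, by omega⟩ from Fin.ext (by have := h.isLt; simp only; omega)]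
      exact hαlast
  subst hR
  set m := idx ⟨k - 1, by omega⟩
  have hm : IsGreatest (Pi1 : Set (Fin ℓ)) m := by
    refine ⟨(hPi1 m).2 ⟨_, rfl⟩, fun h hh => ?_⟩
    obtain ⟨t, rfl⟩ := (hPi1 h).1 hh
    exact hidx.monotone (Fin.le_def.2 (by have := t.isLt; simp only; omega))
  change RootSystemC.IsAdmissible (RootSystemC.simpleRoot ℓ) (RootSystemC.roots ℓ) Pi1 ↔ _
  refine ⟨fun hadm => by_contra fun hne => ?_, fun hlast => ?_⟩
  · exact RootSystemC.not_isAdmissible_of_isGreatest hm (by omega) hadm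
  · exact RootSystemC.isAdmissible_of_last_mem (by omega) hm.1
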